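/- Let E be a minimal Banach space (infinite-dimensional and such that every closed infinite-dimensional subspace of E contains a closed subspace isomorphic to E). Then for all Banach spaces X and Y, the set S_E(X,Y) of E-strictly singular operators is closed under addition; consequently the class S_E is a closed operator ideal in the sense of Pietsch. -/

import Mathlib

/-!
If `S + T` fixes a copy of `E` through `R : E → X`, so that `(S + T) R` is bounded below by
some `c > 0`, minimality makes `S R` strictly singular: being bounded below on a closed
infinite-dimensional subspace, it would be bounded below on a copy of `E`. Kato's lemma then
gives a closed infinite-dimensional subspace `W` on which `‖S R‖ ≤ c / 2`, so `T R` is bounded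
below by `c / 2` on `W`, and by minimality again on a copy of `E` inside `W`.

Kato's lemma is proved by choosing unit vectors `xₙ` with `‖A xₙ‖ ≤ ε / 2 · 4⁻ⁿ` inside the
common kernel of norming functionals `fₖ` of the earlier `xₖ`. The matrix `fₖ (xⱼ)` is then
lower triangular with unit diagonal and entries of modulus at most one, which bounds the
`k`-th coefficient of a vector of `span {xₙ}` by `2 ^ k` times its norm.
-/

/-- `T` fixes a copy of `E` if there is a bounded operator `R : E → X` such that
`T ∘ R` is bounded below. -/
def FixesCopy {𝕜 : Type*} [RCLike 𝕜] (E : Type*) [NormedAddCommGroup E] [NormedSpace 𝕜 E]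
    {X Y : Type*} [NormedAddCommGroup X] [NormedSpace 𝕜 X]
    [NormedAddCommGroup Y] [NormedSpace 𝕜 Y]
    (T : X →L[𝕜] Y) : Prop :=
  ∃ R : E →L[𝕜] X, ∃ c : ℝ, 0 < c ∧ ∀ e : E, c * ‖e‖ ≤ ‖T (R e)‖

open Submodule

section

variable {𝕜 : Type*} [RCLike 𝕜] {E : Type*} [NormedAddCommGroup E] [NormedSpace 𝕜 E]
  {X Y : Type*} [NormedAddCommGroup X] [NormedSpace 𝕜 X] [NormedAddCommGroup Y] [NormedSpace 𝕜 Y]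

def IsStrictlySingular (A : E →L[𝕜] Y) : Prop :=
  ∀ F : Submodule 𝕜 E, IsClosed (F : Set E) → ¬ FiniteDimensional 𝕜 F →
    ¬ ∃ c > 0, ∀ x ∈ F, c * ‖x‖ ≤ ‖A x‖

variable (𝕜 E) in
def ClosedSubspacesContainCopy : Prop :=
  ∀ F : Submodule 𝕜 E, IsClosed (F : Set E) → ¬ FiniteDimensional 𝕜 F →
    ∃ G : Submodule 𝕜 E, G ≤ F ∧ IsClosed (G : Set E) ∧ Nonempty (E ≃L[𝕜] G)

theorem fixesCopy_of_equiv_submodule (T : X →L[𝕜] Y) (R : E →L[𝕜] X) {G : Submodule 𝕜 E}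
    (φ : E ≃L[𝕜] G) {c : ℝ} (hc : 0 < c) (h : ∀ w ∈ G, c * ‖w‖ ≤ ‖T (R w)‖) :
    FixesCopy E T := by
  obtain ⟨K, hK, hφ⟩ := (φ.symm : G →L[𝕜] E).bound
  refine ⟨R.comp (G.subtypeL.comp (φ : E →L[𝕜] G)), c / K, by positivity, fun e => ?_⟩
  have he : ‖e‖ ≤ K * ‖φ e‖ := by simpa using hφ (φ e)
  calc c / K * ‖e‖ ≤ c * ‖φ e‖ := by
        rw [div_mul_eq_mul_div, div_le_iff₀ hK]
        nlinarith
    _ ≤ ‖T (R (φ e))‖ := h _ (φ e).2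

theorem fixesCopy_of_isClosed (hmin : ClosedSubspacesContainCopy 𝕜 E) (T : X →L[𝕜] Y)
    (R : E →L[𝕜] X) {F : Submodule 𝕜 E} (hF : IsClosed (F : Set E))
    (hF' : ¬ FiniteDimensional 𝕜 F) {c : ℝ} (hc : 0 < c)
    (h : ∀ w ∈ F, c * ‖w‖ ≤ ‖T (R w)‖) : FixesCopy E T := by
  obtain ⟨G, hGF, -, ⟨φ⟩⟩ := hmin F hF hF'
  exact fixesCopy_of_equiv_submodule T R φ hc fun w hw => h w (hGF hw)

theorem isStrictlySingular_comp_of_not_fixesCopy (hmin : ClosedSubspacesContainCopy 𝕜 E)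
    {T : X →L[𝕜] Y} (hT : ¬ FixesCopy E T) (R : E →L[𝕜] X) :
    IsStrictlySingular (T.comp R) :=
  fun _ hF hF' ⟨_, hc, h⟩ => hT (fixesCopy_of_isClosed hmin T R hF hF' hc h)

theorem IsStrictlySingular.exists_norm_eq_one_norm_apply_le {A : E →L[𝕜] Y}
    (hA : IsStrictlySingular A) {F : Submodule 𝕜 E} (hF : IsClosed (F : Set E))
    (hF' : ¬ FiniteDimensional 𝕜 F) {ε : ℝ} (hε : 0 < ε) :
    ∃ x ∈ F, ‖x‖ = 1 ∧ ‖A x‖ ≤ ε := by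
  by_contra! h
  refine hA F hF hF' ⟨ε, hε, fun x hx => ?_⟩
  rcases eq_or_ne x 0 with rfl | hx0
  · simp
  have hn : 0 < ‖x‖ := norm_pos_iff.2 hx0
  have := h _ (F.smul_mem ((‖x‖ : 𝕜)⁻¹) hx) (norm_smul_inv_norm hx0)
  rw [map_smul, norm_smul, norm_inv, RCLike.norm_ofReal, abs_of_pos hn, inv_mul_eq_div,
    lt_div_iff₀ hn] at this
  exact this.le

theorem not_finiteDimensional_inf_ker {K V P : Type*} [Field K] [AddCommGroup V] [Module K V]
    [AddCommGroup P] [Module K P] [FiniteDimensional K P] {H : Submodule K V}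
    (hH : ¬ FiniteDimensional K H) (f : V →ₗ[K] P) :
    ¬ FiniteDimensional K ↥(H ⊓ LinearMap.ker f) := fun h =>
  hH <| Module.Finite.iff_fg.2 <|
    fg_of_fg_map_of_fg_inf_ker f (IsNoetherian.noetherian _) (Module.Finite.iff_fg.1 h)

theorem IsStrictlySingular.exists_triangular_seq (hE : ¬ FiniteDimensional 𝕜 E)
    {A : E →L[𝕜] Y} (hA : IsStrictlySingular A) {ε : ℕ → ℝ} (hε : ∀ n, 0 < ε n) :
    ∃ (x : ℕ → E) (f : ℕ → StrongDual 𝕜 E), (∀ n, ‖x n‖ = 1) ∧ (∀ n, ‖f n‖ ≤ 1) ∧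
      (∀ n, f n (x n) = 1) ∧ (∀ k n, k < n → f k (x n) = 0) ∧ ∀ n, ‖A (x n)‖ ≤ ε n := by
  let P : Submodule 𝕜 E → Prop := fun H => IsClosed (H : Set E) ∧ ¬ FiniteDimensional 𝕜 H
  have hstep (n : ℕ) (H : Submodule 𝕜 E) (hH : P H) : ∃ x ∈ H, ‖x‖ = 1 ∧ ‖A x‖ ≤ ε n :=
    hA.exists_norm_eq_one_norm_apply_le hH.1 hH.2 (hε n)
  choose! y hyH hy1 hyA using hstep
  choose g hg1 hgy using fun z : E => exists_dual_vector'' 𝕜 z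
  let H : ℕ → Submodule 𝕜 E := fun n =>
    Nat.rec ⊤ (fun n H => H ⊓ LinearMap.ker (g (y n H) : E →ₗ[𝕜] 𝕜)) n
  have hP : ∀ n, P (H n) := by
    intro n
    induction n with
    | zero => exact ⟨isClosed_univ, fun _ => hE topEquiv.finiteDimensional⟩
    | succ n ih =>
      exact ⟨ih.1.inter (g _).isClosed_ker, not_finiteDimensional_inf_ker ih.2 _⟩
  have hanti : Antitone H := antitone_nat_of_succ_le fun n => inf_le_left
  refine ⟨fun n => y n (H n), fun n => g (y n (H n)), fun n => hy1 n _ (hP n),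
    fun n => hg1 _, fun n => ?_, fun k n hkn => ?_, fun n => hyA n _ (hP n)⟩
  · simp [hgy, hy1 n _ (hP n)]
  · exact (hanti hkn (hyH n _ (hP n))).2

theorem norm_le_two_pow_mul_norm_sum_of_triangular {x : ℕ → E} {f : ℕ → StrongDual 𝕜 E}
    (hx : ∀ n, ‖x n‖ ≤ 1) (hf : ∀ n, ‖f n‖ ≤ 1) (hfx : ∀ n, f n (x n) = 1)
    (hlt : ∀ k n, k < n → f k (x n) = 0) (s : Finset ℕ) (a : ℕ → 𝕜) {k : ℕ} (hk : k ∈ s) :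
    ‖a k‖ ≤ 2 ^ k * ‖∑ j ∈ s, a j • x j‖ := by
  induction k using Nat.strong_induction_on with
  | _ k ih =>
  set w := ∑ j ∈ s, a j • x j
  have hentry (j : ℕ) : ‖f k (x j)‖ ≤ 1 :=
    ((f k).le_opNorm (x j)).trans (mul_le_one₀ (hf k) (norm_nonneg _) (hx j))
  have hdiag : ∑ j ∈ s with ¬ j < k, a j * f k (x j) = a k := by
    rw [Finset.sum_eq_single_of_mem k (by simp [hk])]
    · simp [hfx]
    · intro j hj hjk
      simp only [Finset.mem_filter, not_lt] at hj
      simp [hlt k j (lt_of_le_of_ne hj.2 (Ne.symm hjk))]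
  have hfw : f k w = a k + ∑ j ∈ s with j < k, a j * f k (x j) := by
    rw [← hdiag, add_comm, Finset.sum_filter_add_sum_filter_not]
    simp [w, map_sum]
  have hbelow : ‖∑ j ∈ s with j < k, a j * f k (x j)‖ ≤ (2 ^ k - 1) * ‖w‖ :=
    calc ‖∑ j ∈ s with j < k, a j * f k (x j)‖ ≤ ∑ j ∈ s with j < k, 2 ^ j * ‖w‖ := by
          refine norm_sum_le_of_le _ fun j hj => ?_
          simp only [Finset.mem_filter] at hj
          rw [norm_mul]
          exact mul_le_of_le_one_right (norm_nonneg _) (hentry j) |>.trans (ih j hj.2 hj.1)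
      _ ≤ ∑ j ∈ Finset.range k, 2 ^ j * ‖w‖ :=
          Finset.sum_le_sum_of_subset_of_nonneg (fun j hj => by simp_all)
            fun _ _ _ => by positivity
      _ = (2 ^ k - 1) * ‖w‖ := by
          rw [← Finset.sum_mul, geom_sum_eq (by norm_num : (2 : ℝ) ≠ 1)]
          norm_num
  calc ‖a k‖ = ‖f k w - ∑ j ∈ s with j < k, a j * f k (x j)‖ := by rw [hfw, add_sub_cancel_right]
    _ ≤ ‖w‖ + (2 ^ k - 1) * ‖w‖ :=
        (norm_sub_le _ _).trans (add_le_add (((f k).le_opNorm w).trans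
          (mul_le_of_le_one_left (norm_nonneg _) (hf k))) hbelow)
    _ = 2 ^ k * ‖w‖ := by ring

theorem IsStrictlySingular.exists_subspace_norm_apply_le (hE : ¬ FiniteDimensional 𝕜 E)
    {A : E →L[𝕜] Y} (hA : IsStrictlySingular A) {ε : ℝ} (hε : 0 < ε) :
    ∃ W : Submodule 𝕜 E, IsClosed (W : Set E) ∧ ¬ FiniteDimensional 𝕜 W ∧
      ∀ w ∈ W, ‖A w‖ ≤ ε * ‖w‖ := by
  obtain ⟨x, f, hx, hf, hfx, hlt, hAx⟩ :=
    hA.exists_triangular_seq hE (ε := fun n => ε / 2 * (1 / 4) ^ n) fun n => by positivity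
  have hcoeff := norm_le_two_pow_mul_norm_sum_of_triangular (fun n => (hx n).le) hf hfx hlt
  have hspan : ∀ w ∈ span 𝕜 (Set.range x), ‖A w‖ ≤ ε * ‖w‖ := by
    intro w hw
    obtain ⟨a, rfl⟩ := Finsupp.mem_span_range_iff_exists_finsupp.1 hw
    set w := ∑ j ∈ a.support, a j • x j
    have hterm (j : ℕ) (hj : j ∈ a.support) :
        ‖a j • A (x j)‖ ≤ ε / 2 * ‖w‖ * (1 / 2) ^ j := by
      have hpow : (2 : ℝ) ^ j * (1 / 4) ^ j = (1 / 2) ^ j := by rw [← mul_pow]; norm_num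
      calc ‖a j • A (x j)‖ ≤ 2 ^ j * ‖w‖ * (ε / 2 * (1 / 4) ^ j) := by
            rw [norm_smul]
            exact mul_le_mul (hcoeff _ a hj) (hAx j) (norm_nonneg _) (by positivity)
        _ = ε / 2 * ‖w‖ * (1 / 2) ^ j := by rw [← hpow]; ring
    calc ‖A w‖ = ‖∑ j ∈ a.support, a j • A (x j)‖ := by simp [w, map_sum]
      _ ≤ ∑ j ∈ a.support, ε / 2 * ‖w‖ * (1 / 2) ^ j := norm_sum_le_of_le _ hterm
      _ ≤ ε / 2 * ‖w‖ * 2 := by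
          rw [← Finset.mul_sum]
          gcongr
          exact (summable_geometric_two.sum_le_tsum _ fun _ _ => by positivity).trans_eq
            tsum_geometric_two
      _ = ε * ‖w‖ := by ring
  have hli : LinearIndependent 𝕜 x := linearIndependent_iff'.2 fun s a hs k hk =>
    norm_le_zero_iff.1 (by simpa [hs] using hcoeff s a hk)
  refine ⟨(span 𝕜 (Set.range x)).topologicalClosure, isClosed_topologicalClosure _,
    fun _ => ?_, fun w hw => ?_⟩
  · have := finiteDimensional_of_le (le_topologicalClosure (span 𝕜 (Set.range x)))
    exact Module.Finite.not_linearIndependent_of_infinite _ (linearIndependent_span hli)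
  · rw [← SetLike.mem_coe, topologicalClosure_coe] at hw
    have hclosed : IsClosed {w : E | ‖A w‖ ≤ ε * ‖w‖} := isClosed_le (by fun_prop) (by fun_prop)
    exact closure_minimal hspan hclosed hw

end

theorem strictlySingular_add_general {𝕜 : Type*} [RCLike 𝕜]
    (E : Type*) [NormedAddCommGroup E] [NormedSpace 𝕜 E]
    (hE : ¬ FiniteDimensional 𝕜 E)
    (hmin : ∀ F : Submodule 𝕜 E, IsClosed (F : Set E) → ¬ FiniteDimensional 𝕜 F →
      ∃ G : Submodule 𝕜 E, G ≤ F ∧ IsClosed (G : Set E) ∧ Nonempty (E ≃L[𝕜] G)) :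
    ∀ (X Y : Type*) [NormedAddCommGroup X] [NormedSpace 𝕜 X] [CompleteSpace X]
      [NormedAddCommGroup Y] [NormedSpace 𝕜 Y] [CompleteSpace Y]
      (S T : X →L[𝕜] Y),
      ¬ FixesCopy (𝕜 := 𝕜) E S → ¬ FixesCopy (𝕜 := 𝕜) E T →
        ¬ FixesCopy (𝕜 := 𝕜) E (S + T) := by
  intro X Y _ _ _ _ _ _ S T hS hT ⟨R, c, hc, hR⟩
  obtain ⟨W, hWc, hWd, hSW⟩ := (isStrictlySingular_comp_of_not_fixesCopy hmin hS R)
    |>.exists_subspace_norm_apply_le hE (half_pos hc)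
  refine hT (fixesCopy_of_isClosed hmin T R hWc hWd (half_pos hc) fun w hw => ?_)
  have hsum : ‖(S + T) (R w)‖ ≤ ‖S (R w)‖ + ‖T (R w)‖ := norm_add_le _ _
  have hSw : ‖S (R w)‖ ≤ c / 2 * ‖w‖ := hSW w hw
  linarith [hR w]

/-- Let `E` be a minimal Banach space: infinite-dimensional and such that
every closed infinite-dimensional subspace of `E` contains a closed subspace isomorphic
to `E`. Then for all Banach spaces `X`, `Y`, the set of `E`-strictly singular operators
from `X` to `Y` is closed under addition (whence the class `S_E` is a closed operator
ideal in the sense of Pietsch). -/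
theorem strictlySingular_add {𝕜 : Type*} [RCLike 𝕜]
    (E : Type*) [NormedAddCommGroup E] [NormedSpace 𝕜 E] [CompleteSpace E]
    (hE : ¬ FiniteDimensional 𝕜 E)
    (hmin : ∀ F : Submodule 𝕜 E, IsClosed (F : Set E) → ¬ FiniteDimensional 𝕜 F →
      ∃ G : Submodule 𝕜 E, G ≤ F ∧ IsClosed (G : Set E) ∧ Nonempty (E ≃L[𝕜] G)) :
    ∀ (X Y : Type*) [NormedAddCommGroup X] [NormedSpace 𝕜 X] [CompleteSpace X]
      [NormedAddCommGroup Y] [NormedSpace 𝕜 Y] [CompleteSpace Y]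
      (S T : X →L[𝕜] Y),
      ¬ FixesCopy (𝕜 := 𝕜) E S → ¬ FixesCopy (𝕜 := 𝕜) E T →
        ¬ FixesCopy (𝕜 := 𝕜) E (S + T) :=
  strictlySingular_add_general E hE hmin
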